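/- Let G be a graph on [n] with diameter exactly k+2 (k ≥ 1) and let Q ⊆ binom([n],2). Call a pair {u1,u2} ℓ-undetectable (for ℓ ∈ [k]) if u1 ≁ u2, {u1,u2} ∉ Q, and there is no sequence u1 w1 ... w_ℓ u2 such that ℓ of its consecutive pairs are edges of G, the one remaining consecutive pair {a,b} belongs to Q, and d_G(a,b) ≥ ℓ+2. If there exists a pair {u1,u2} that is ℓ-undetectable for every ℓ ∈ [k] and additionally {u1,u2} ∉ Q and u1 ≁ u2, then G is not Q-reconstructible: the graph G' = G + {u1,u2} satisfies d_{G'}(x,y) = d_G(x,y) for all {x,y} ∈ Q. -/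
import Mathlib


/-- `{u1, u2}` is `ℓ`-undetectable with respect to the query set `Q`: the vertices are
non-adjacent, the pair is not queried, and there is no sequence `u1 w1 ... wℓ u2` in
which `ℓ` of the consecutive pairs are edges of `G` and the one remaining consecutive
pair belongs to `Q` and is at distance at least `ℓ + 2` in `G`. -/
def LUndetectable {n : ℕ} (G : SimpleGraph (Fin n)) (Q : Set (Sym2 (Fin n))) (ℓ : ℕ)
    (u1 u2 : Fin n) : Prop :=
  ¬ G.Adj u1 u2 ∧ s(u1, u2) ∉ Q ∧
    ¬ ∃ w : Fin (ℓ + 2) → Fin n, w 0 = u1 ∧ w (Fin.last (ℓ + 1)) = u2 ∧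
      ∃ j : Fin (ℓ + 1), s(w j.castSucc, w j.succ) ∈ Q ∧
        ℓ + 2 ≤ G.dist (w j.castSucc) (w j.succ) ∧
        ∀ i : Fin (ℓ + 1), i ≠ j → G.Adj (w i.castSucc) (w i.succ)

private lemma split_walk {n : ℕ} (G : SimpleGraph (Fin n)) (u1 u2 : Fin n)
    {x y : Fin n} (p : (G ⊔ SimpleGraph.fromEdgeSet {s(u1, u2)}).Walk x y) :
    (∃ p' : G.Walk x y, p'.length ≤ p.length) ∨
    (∃ q : G.Walk x u1, ∃ r : G.Walk u2 y, q.length + r.length + 1 ≤ p.length) ∨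
    (∃ q : G.Walk x u2, ∃ r : G.Walk u1 y, q.length + r.length + 1 ≤ p.length) := by
  induction p with
  | nil => exact Or.inl ⟨SimpleGraph.Walk.nil, le_refl _⟩
  | @cons a c b h p ih =>
    rw [SimpleGraph.sup_adj, SimpleGraph.fromEdgeSet_adj] at h
    rcases h with hG | ⟨hE, _⟩
    · rcases ih with ⟨p', hp'⟩ | ⟨q, r, hlen⟩ | ⟨q, r, hlen⟩
      · exact Or.inl ⟨SimpleGraph.Walk.cons hG p', by
          simp only [SimpleGraph.Walk.length_cons]; omega⟩
      · exact Or.inr (Or.inl ⟨SimpleGraph.Walk.cons hG q, r, by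
          simp only [SimpleGraph.Walk.length_cons]; omega⟩)
      · exact Or.inr (Or.inr ⟨SimpleGraph.Walk.cons hG q, r, by
          simp only [SimpleGraph.Walk.length_cons]; omega⟩)
    · simp only [Set.mem_singleton_iff, Sym2.eq_iff] at hE
      rcases hE with ⟨rfl, rfl⟩ | ⟨rfl, rfl⟩
      · rcases ih with ⟨p', hp'⟩ | ⟨q, r, hlen⟩ | ⟨q, r, hlen⟩
        · exact Or.inr (Or.inl ⟨SimpleGraph.Walk.nil, p', by
            simp only [SimpleGraph.Walk.length_cons, SimpleGraph.Walk.length_nil]; omega⟩)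
        · exact Or.inr (Or.inl ⟨SimpleGraph.Walk.nil, r, by
            simp only [SimpleGraph.Walk.length_cons, SimpleGraph.Walk.length_nil]; omega⟩)
        · exact Or.inl ⟨r, by simp only [SimpleGraph.Walk.length_cons]; omega⟩
      · rcases ih with ⟨p', hp'⟩ | ⟨q, r, hlen⟩ | ⟨q, r, hlen⟩
        · exact Or.inr (Or.inr ⟨SimpleGraph.Walk.nil, p', by
            simp only [SimpleGraph.Walk.length_cons, SimpleGraph.Walk.length_nil]; omega⟩)
        · exact Or.inl ⟨r, by simp only [SimpleGraph.Walk.length_cons]; omega⟩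
        · exact Or.inr (Or.inr ⟨SimpleGraph.Walk.nil, r, by
            simp only [SimpleGraph.Walk.length_cons, SimpleGraph.Walk.length_nil]; omega⟩)

private lemma build_seq {n : ℕ} (G : SimpleGraph (Fin n)) {u1 u2 a b : Fin n}
    (q : G.Walk u1 a) (r : G.Walk b u2) :
    ∃ w : Fin (q.length + r.length + 2) → Fin n,
      w 0 = u1 ∧ w (Fin.last (q.length + r.length + 1)) = u2 ∧
      ∃ j : Fin (q.length + r.length + 1),
        w j.castSucc = a ∧ w j.succ = b ∧
        ∀ i : Fin (q.length + r.length + 1), i ≠ j → G.Adj (w i.castSucc) (w i.succ) := by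
  set m := q.length with hm
  refine ⟨fun i => if (i : ℕ) ≤ m then q.getVert i else r.getVert ((i : ℕ) - (m + 1)),
    ?_, ?_, ⟨m, by omega⟩, ?_, ?_, ?_⟩
  · simp [q.getVert_zero]
  · simp only [Fin.val_last]
    rw [if_neg (by omega)]
    rw [show m + r.length + 1 - (m + 1) = r.length from by omega, r.getVert_length]
  · simp only [Fin.coe_castSucc]
    rw [if_pos (le_refl m)]
    exact q.getVert_length
  · simp only [Fin.val_succ]
    rw [if_neg (by omega)]
    rw [show m + 1 - (m + 1) = 0 from by omega, r.getVert_zero]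
  · intro i hi
    have hvne : (i : ℕ) ≠ m := fun h => hi (Fin.ext h)
    have hib : (i : ℕ) < m + r.length + 1 := i.isLt
    simp only [Fin.coe_castSucc, Fin.val_succ]
    rcases Nat.lt_or_ge (i : ℕ) m with hlt | hge
    · rw [if_pos (by omega : (i : ℕ) ≤ m), if_pos (by omega : (i : ℕ) + 1 ≤ m)]
      exact q.adj_getVert_succ hlt
    · have hgt : m < (i : ℕ) := by omega
      rw [if_neg (by omega), if_neg (by omega),
        show (i : ℕ) + 1 - (m + 1) = ((i : ℕ) - (m + 1)) + 1 from by omega]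
      exact r.adj_getVert_succ (by omega)

/-- If `G` is connected of diameter exactly `k + 2` and the non-adjacent, non-queried
pair `{u1, u2}` is `ℓ`-undetectable for every `ℓ ∈ [k]`, then adding the edge
`{u1, u2}` preserves all queried distances, so `Q` does not reconstruct `G`. -/
theorem stmt11 {n : ℕ} (k : ℕ) (hk : 1 ≤ k) (G : SimpleGraph (Fin n))
    (hconn : G.Connected) (hdiam_le : ∀ u v : Fin n, G.dist u v ≤ k + 2)
    (hdiam_eq : ∃ u v : Fin n, G.dist u v = k + 2)
    (Q : Set (Sym2 (Fin n))) (u1 u2 : Fin n) (hne : u1 ≠ u2)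
    (hadj : ¬ G.Adj u1 u2) (hQ : s(u1, u2) ∉ Q)
    (hund : ∀ ℓ ∈ Finset.Icc 1 k, LUndetectable G Q ℓ u1 u2) :
    ∀ x y : Fin n, s(x, y) ∈ Q →
      (G ⊔ SimpleGraph.fromEdgeSet {s(u1, u2)}).dist x y = G.dist x y := by
  intro x y hxyQ
  have hle : G ≤ G ⊔ SimpleGraph.fromEdgeSet {s(u1, u2)} := le_sup_left
  have hd'le : (G ⊔ SimpleGraph.fromEdgeSet {s(u1, u2)}).dist x y ≤ G.dist x y := by
    obtain ⟨p, hp⟩ := hconn.exists_walk_length_eq_dist x y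
    calc (G ⊔ SimpleGraph.fromEdgeSet {s(u1, u2)}).dist x y
        ≤ (p.mapLe hle).length := SimpleGraph.dist_le _
      _ = p.length := SimpleGraph.Walk.length_map _ _
      _ = G.dist x y := hp
  refine le_antisymm hd'le (not_lt.mp ?_)
  intro hlt
  have hreach : (G ⊔ SimpleGraph.fromEdgeSet {s(u1, u2)}).Reachable x y :=
    ((hconn x y).mono hle)
  obtain ⟨p, hp⟩ := hreach.exists_walk_length_eq_dist
  have hdxy : G.dist x y ≤ k + 2 := hdiam_le x y
  rcases split_walk G u1 u2 p with ⟨p', hp'⟩ | ⟨q, r, hlen⟩ | ⟨q, r, hlen⟩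
  · have := SimpleGraph.dist_le p'
    omega
  · -- q : G.Walk x u1, r : G.Walk u2 y; use q.reverse : u1 → x, r.reverse : y → u2
    set q' := q.reverse with hq'
    set r' := r.reverse with hr'
    have hq'l : q'.length = q.length := q.length_reverse
    have hr'l : r'.length = r.length := r.length_reverse
    have hℓpos : 1 ≤ q'.length + r'.length := by
      by_contra h
      have h0 : q.length = 0 ∧ r.length = 0 := by omega
      have hxu : x = u1 := SimpleGraph.Walk.eq_of_length_eq_zero h0.1
      have hyu : u2 = y := SimpleGraph.Walk.eq_of_length_eq_zero h0.2
      subst hxu; subst hyu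
      exact hQ hxyQ
    have hℓk : q'.length + r'.length ≤ k := by omega
    obtain ⟨_, _, hno⟩ := hund (q'.length + r'.length) (Finset.mem_Icc.mpr ⟨hℓpos, hℓk⟩)
    obtain ⟨w, hw0, hwl, j, hja, hjb, hadji⟩ := build_seq G q' r'
    exact hno ⟨w, hw0, hwl, j, by rw [hja, hjb]; exact hxyQ,
      by rw [hja, hjb]; omega, hadji⟩
  · -- q : G.Walk x u2, r : G.Walk u1 y; use r : u1 → y, q : x → u2
    have hℓpos : 1 ≤ r.length + q.length := by
      by_contra h
      have h0 : r.length = 0 ∧ q.length = 0 := by omega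
      have hxu : u1 = y := SimpleGraph.Walk.eq_of_length_eq_zero h0.1
      have hyu : x = u2 := SimpleGraph.Walk.eq_of_length_eq_zero h0.2
      subst hxu; subst hyu
      rw [Sym2.eq_swap] at hxyQ
      exact hQ hxyQ
    have hℓk : r.length + q.length ≤ k := by omega
    obtain ⟨_, _, hno⟩ := hund (r.length + q.length) (Finset.mem_Icc.mpr ⟨hℓpos, hℓk⟩)
    obtain ⟨w, hw0, hwl, j, hja, hjb, hadji⟩ := build_seq G r q
    have hdyx : G.dist y x = G.dist x y := SimpleGraph.dist_comm
    exact hno ⟨w, hw0, hwl, j, by rw [hja, hjb, Sym2.eq_swap]; exact hxyQ,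
      by rw [hja, hjb, hdyx]; omega, hadji⟩
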